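/- arXiv:1302.5896 — 3 statements merged into one kernel-verified Lean document; each statement's English description precedes it below -/
import Mathlib

section
/- Let (X,d) be a finite ultrametric space with at least 2 points. Define the diametral graph G_d on vertex set X by joining u and v iff d(u,v) = diam X. Then G_d is a complete multipartite graph with at least 2 parts; equivalently, the relation 'd(u,v) < diam X' is an equivalence relation on X with at least 2 equivalence classes, and points in distinct classes are at distance diam X. -/
/-- An ultrametric space: a metric space satisfying the strong triangle inequality. -/
def IsUltrametric (X : Type*) [MetricSpace X] : Prop :=
  ∀ x y z : X, dist x y ≤ max (dist x z) (dist z y)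

/-- The ballean of a metric space: closed balls whose radius is realized as a
distance from the center (i.e. lies in the spectrum `Sp_t(X)`). -/
def Ballean (X : Type*) [MetricSpace X] : Set (Set X) :=
  {B | ∃ t r, (∃ x : X, dist x t = r) ∧ B = Metric.closedBall t r}

/-- A ball-preserving map: images of balls of `B_X` are in `B_Y`, preimages of
balls of `B_Y` are in `B_X`. -/
def BallPreserving {X Y : Type*} [MetricSpace X] [MetricSpace Y] (F : X → Y) : Prop :=
  (∀ Z ∈ Ballean X, F '' Z ∈ Ballean Y) ∧ (∀ W ∈ Ballean Y, F ⁻¹' W ∈ Ballean X)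

/-!
By the strong triangle inequality, `dist u v < r` is transitive, hence an equivalence relation
for every `r > 0`. Take `r = diam X`, which is positive once `X` has two points. In a finite space
the diameter is attained, so there are at least two classes, and since no distance exceeds it,
points in different classes are exactly at distance `diam X`.
-/

open Metric

theorem IsUltrametric.isUltrametricDist {X : Type*} [MetricSpace X] (hX : IsUltrametric X) :
    IsUltrametricDist X :=
  ⟨fun x y z => hX x z y⟩

theorem IsUltrametricDist.equivalence_dist_lt {X : Type*} [PseudoMetricSpace X]
    [IsUltrametricDist X] {r : ℝ} (hr : 0 < r) : Equivalence (fun u v : X => dist u v < r) where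
  refl u := by rwa [dist_self]
  symm h := by rwa [dist_comm]
  trans h₁ h₂ := (dist_triangle_max _ _ _).trans_lt (max_lt h₁ h₂)

section Finite

variable {X : Type*} [PseudoMetricSpace X] [Finite X]

theorem dist_le_diam_univ (u v : X) : dist u v ≤ diam (Set.univ : Set X) :=
  dist_le_diam_of_mem Set.finite_univ.isBounded (Set.mem_univ u) (Set.mem_univ v)

theorem exists_dist_eq_diam_univ [Nonempty X] : ∃ u v : X, dist u v = diam (Set.univ : Set X) := by
  obtain ⟨⟨u, v⟩, hmax⟩ := Finite.exists_max fun p : X × X => dist p.1 p.2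
  refine ⟨u, v, le_antisymm (dist_le_diam_univ u v) ?_⟩
  exact diam_le_of_forall_dist_le dist_nonneg fun x _ y _ => hmax (x, y)

end Finite

theorem diametral_graph_complete_multipartite {X : Type*} [MetricSpace X] [Fintype X]
    (hX : IsUltrametric X) (hcard : 2 ≤ Fintype.card X) :
    Equivalence (fun u v : X => dist u v < Metric.diam (Set.univ : Set X)) ∧
      (∃ u v : X, ¬ dist u v < Metric.diam (Set.univ : Set X)) ∧
      (∀ u v : X, ¬ dist u v < Metric.diam (Set.univ : Set X) →
        dist u v = Metric.diam (Set.univ : Set X)) := by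
  have := hX.isUltrametricDist
  have : Nontrivial X := Fintype.one_lt_card_iff_nontrivial.mp hcard
  have hdiam_pos : 0 < diam (Set.univ : Set X) :=
    diam_pos Set.nontrivial_univ Set.finite_univ.isBounded
  obtain ⟨u, v, huv⟩ := exists_dist_eq_diam_univ (X := X)
  exact ⟨IsUltrametricDist.equivalence_dist_lt hdiam_pos, ⟨u, v, huv.not_lt⟩,
    fun u v h => (dist_le_diam_univ u v).antisymm (not_lt.mp h)⟩
end

section
/- Let X, Y be metric spaces and F : X → Y a ball-preserving bijection. Then the map B ↦ F(B) is an order isomorphism between the posets (B_X, ⊆) and (B_Y, ⊆). -/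
def OrderIso.subtypeEquiv {α β : Type*} [LE α] [LE β] (e : α ≃o β) {p : α → Prop}
    {q : β → Prop} (h : ∀ a, p a ↔ q (e a)) : Subtype p ≃o Subtype q where
  toEquiv := e.toEquiv.subtypeEquiv h
  map_rel_iff' := e.map_rel_iff

theorem BallPreserving.image_mem_ballean_iff {X Y : Type*} [MetricSpace X] [MetricSpace Y]
    {F : X → Y} (hF : BallPreserving F) (hinj : Function.Injective F) (B : Set X) :
    B ∈ Ballean X ↔ F '' B ∈ Ballean Y :=
  ⟨hF.1 B, fun h => Set.preimage_image_eq B hinj ▸ hF.2 _ h⟩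

theorem ballPreserving_orderIso {X Y : Type*} [MetricSpace X] [MetricSpace Y]
    (F : X → Y) (hbij : Function.Bijective F) (hF : BallPreserving F) :
    ∃ e : {B // B ∈ Ballean X} ≃o {B // B ∈ Ballean Y},
      ∀ B : {B // B ∈ Ballean X}, (e B : Set Y) = F '' (B : Set X) :=
  ⟨(Equiv.ofBijective F hbij).toOrderIsoSet.subtypeEquiv
      (hF.image_mem_ballean_iff hbij.injective), fun _ => rfl⟩
end

section
/- Let X and Y be finite ultrametric spaces and Φ : X → Y a ball-preserving bijection. Then the posets (B_X, ⊆) and (B_Y, ⊆) are isomorphic. Conversely, if (B_X, ⊆) and (B_Y, ⊆) are isomorphic as posets, then there exists a ball-preserving bijection Φ : X → Y. -/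
section SingletonFamily

variable {α β : Type*} {S : Set (Set α)} {T : Set (Set β)}

lemma isMin_iff_exists_eq_singleton (hS : ∀ x, {x} ∈ S) (hSne : ∀ B ∈ S, B.Nonempty)
    {B : {B // B ∈ S}} : IsMin B ↔ ∃ x, B.1 = {x} := by
  constructor
  · intro hB
    obtain ⟨x, hx⟩ := hSne B.1 B.2
    have hxB : (⟨{x}, hS x⟩ : {B // B ∈ S}) ≤ B := Set.singleton_subset_iff.mpr hx
    exact ⟨x, Set.Subset.antisymm (hB hxB) hxB⟩
  · rintro ⟨x, hx⟩ C (hCB : C.1 ⊆ B.1)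
    have hC : C.1 = {x} := (hSne C.1 C.2).subset_singleton_iff.mp (hx ▸ hCB)
    exact (hx.trans hC.symm).le

lemma OrderIso.exists_apply_singleton_eq_singleton (hS : ∀ x, {x} ∈ S)
    (hSne : ∀ B ∈ S, B.Nonempty) (hT : ∀ y, {y} ∈ T) (hTne : ∀ B ∈ T, B.Nonempty)
    (e : {B // B ∈ S} ≃o {B // B ∈ T}) (x : α) : ∃ y, (e ⟨{x}, hS x⟩).1 = {y} := by
  rw [← isMin_iff_exists_eq_singleton hT hTne, e.isMin_apply,
    isMin_iff_exists_eq_singleton hS hSne]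
  exact ⟨x, rfl⟩

lemma OrderIso.preimage_apply_eq (hS : ∀ x, {x} ∈ S) (e : {B // B ∈ S} ≃o {B // B ∈ T})
    {Φ : α → β} (hΦ : ∀ x, (e ⟨{x}, hS x⟩).1 = {Φ x}) (B : {B // B ∈ S}) :
    Φ ⁻¹' (e B).1 = B.1 := by
  ext x
  have hle : (⟨{x}, hS x⟩ : {B // B ∈ S}) ≤ B ↔ e ⟨{x}, hS x⟩ ≤ e B := e.le_iff_le.symm
  change {x} ⊆ B.1 ↔ (e ⟨{x}, hS x⟩).1 ⊆ (e B).1 at hle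
  rw [hΦ, Set.singleton_subset_iff, Set.singleton_subset_iff] at hle
  exact hle.symm

lemma OrderIso.bijective_of_apply_singleton (hS : ∀ x, {x} ∈ S) (hSne : ∀ B ∈ S, B.Nonempty)
    (hT : ∀ y, {y} ∈ T) (e : {B // B ∈ S} ≃o {B // B ∈ T}) {Φ : α → β}
    (hΦ : ∀ x, (e ⟨{x}, hS x⟩).1 = {Φ x}) : Function.Bijective Φ := by
  refine ⟨fun x x' hxx' => ?_, fun y => ?_⟩
  · have hfiber : Φ ⁻¹' {Φ x} = {x} := by
      rw [← hΦ, e.preimage_apply_eq hS hΦ]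
    have hx' : x' ∈ Φ ⁻¹' {Φ x} := hxx'.symm
    rw [hfiber] at hx'
    exact hx'.symm
  · have hfiber := e.preimage_apply_eq hS hΦ (e.symm ⟨{y}, hT y⟩)
    rw [e.apply_symm_apply] at hfiber
    obtain ⟨x, hx⟩ := hSne _ (e.symm ⟨{y}, hT y⟩).2
    exact ⟨x, by rwa [← hfiber] at hx⟩

theorem OrderIso.exists_bijective_image_preimage (hS : ∀ x, {x} ∈ S)
    (hSne : ∀ B ∈ S, B.Nonempty) (hT : ∀ y, {y} ∈ T) (hTne : ∀ B ∈ T, B.Nonempty)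
    (e : {B // B ∈ S} ≃o {B // B ∈ T}) :
    ∃ Φ : α → β, Function.Bijective Φ ∧ (∀ B ∈ S, Φ '' B ∈ T) ∧ (∀ W ∈ T, Φ ⁻¹' W ∈ S) := by
  choose Φ hΦ using e.exists_apply_singleton_eq_singleton hS hSne hT hTne
  have hbij := e.bijective_of_apply_singleton hS hSne hT hΦ
  have hpre := e.preimage_apply_eq hS hΦ
  refine ⟨Φ, hbij, fun B hB => ?_, fun W hW => ?_⟩
  · have hBeq : B = Φ ⁻¹' (e ⟨B, hB⟩).1 := (hpre ⟨B, hB⟩).symm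
    rw [hBeq, Set.image_preimage_eq _ hbij.2]
    exact (e ⟨B, hB⟩).2
  · have hWeq : Φ ⁻¹' W = (e.symm ⟨W, hW⟩).1 := by simpa using hpre (e.symm ⟨W, hW⟩)
    exact hWeq ▸ (e.symm ⟨W, hW⟩).2

def orderIsoOfBijective {Φ : α → β} (hΦ : Function.Bijective Φ) (himage : ∀ B ∈ S, Φ '' B ∈ T)
    (hpreimage : ∀ W ∈ T, Φ ⁻¹' W ∈ S) : {B // B ∈ S} ≃o {B // B ∈ T} where
  toFun B := ⟨Φ '' B.1, himage B.1 B.2⟩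
  invFun W := ⟨Φ ⁻¹' W.1, hpreimage W.1 W.2⟩
  left_inv B := Subtype.ext (Set.preimage_image_eq B.1 hΦ.1)
  right_inv W := Subtype.ext (Set.image_preimage_eq W.1 hΦ.2)
  map_rel_iff' := Set.image_subset_image_iff hΦ.1

end SingletonFamily

lemma singleton_mem_ballean {X : Type*} [MetricSpace X] (x : X) : {x} ∈ Ballean X :=
  ⟨x, 0, ⟨x, dist_self x⟩, Metric.closedBall_zero.symm⟩

lemma nonempty_of_mem_ballean {X : Type*} [MetricSpace X] {B : Set X} (hB : B ∈ Ballean X) :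
    B.Nonempty := by
  obtain ⟨t, r, ⟨x, rfl⟩, rfl⟩ := hB
  exact Metric.nonempty_closedBall.mpr dist_nonneg

theorem ballean_iso_iff_ballPreserving_general {X Y : Type*} [MetricSpace X] [MetricSpace Y] :
    (∃ Φ : X → Y, Function.Bijective Φ ∧ BallPreserving Φ) ↔
      Nonempty ({B // B ∈ Ballean X} ≃o {B // B ∈ Ballean Y}) := by
  constructor
  · rintro ⟨Φ, hΦ, himage, hpreimage⟩
    exact ⟨orderIsoOfBijective hΦ himage hpreimage⟩
  · rintro ⟨e⟩
    exact e.exists_bijective_image_preimage singleton_mem_ballean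
      (fun _ => nonempty_of_mem_ballean) singleton_mem_ballean (fun _ => nonempty_of_mem_ballean)

theorem ballean_iso_iff_ballPreserving {X Y : Type*} [MetricSpace X] [MetricSpace Y]
    [Fintype X] [Fintype Y] [Nonempty X] [Nonempty Y]
    (hX : IsUltrametric X) (hY : IsUltrametric Y) :
    (∃ Φ : X → Y, Function.Bijective Φ ∧ BallPreserving Φ) ↔
      Nonempty ({B // B ∈ Ballean X} ≃o {B // B ∈ Ballean Y}) :=
  ballean_iso_iff_ballPreserving_general
end
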